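/- arXiv:1910.12497 — 7 statements merged into one kernel-verified Lean document; each statement's English description precedes it below -/
import Mathlib

section
/- Let G be a finite abelian group and let (X_g)_{g∈G} be commuting indeterminates over ℂ. Then the group determinant, i.e. the determinant of the G×G matrix whose (g,h) entry is the variable X_{g·h⁻¹}, factors as the product over all characters χ of G of the linear forms ∑_{g∈G} χ(g)·X_g; that is, in the multivariate polynomial ring ℂ[(X_g)_{g∈G}] one has det(X_{gh⁻¹})_{g,h∈G} = ∏_{χ∈Ĝ} (∑_{g∈G} χ(g) X_g). -/
/-!
Every character `χ`, read as a row vector, is a left eigenvector of the group matrix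
`(x (g * h⁻¹))_{g,h}` with eigenvalue `∑ g, χ g * x g`. A finite abelian group has as many
complex characters as elements, and by Dedekind's lemma they are linearly independent, so the
character table is an invertible matrix conjugating the group matrix to a diagonal one.
-/

open Matrix MvPolynomial

theorem MonoidHom.sum_mul_apply_mul_inv {G R : Type*} [Group G] [Fintype G] [CommSemiring R]
    (χ : G →* R) (x : G → R) (h : G) :
    ∑ g, χ g * x (g * h⁻¹) = (∑ g, χ g * x g) * χ h := by
  rw [← Equiv.sum_comp (Equiv.mulRight h), Finset.sum_mul]
  simp [mul_right_comm]

namespace Matrix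

variable {G R ι : Type*}

def groupMatrix [Group G] (x : G → R) : Matrix G G R := of fun g h => x (g * h⁻¹)

def charTable [MulOneClass G] [MulOneClass R] (χ : ι → G →* R) : Matrix ι G R :=
  of fun i g => χ i g

theorem charTable_mul_groupMatrix [Group G] [Fintype G] [CommSemiring R] [Fintype ι]
    [DecidableEq ι] (χ : ι → G →* R) (x : G → R) :
    charTable χ * groupMatrix x = diagonal (fun i => ∑ g, χ i g * x g) * charTable χ := by
  ext i h
  rw [diagonal_mul, mul_apply]
  exact (χ i).sum_mul_apply_mul_inv x h

theorem det_eq_prod_of_mul_eq_diagonal_mul {n : Type*} [Fintype n] [DecidableEq n] [CommRing R]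
    {U A : Matrix n n R} {d : n → R} (hU : IsUnit U.det) (h : U * A = diagonal d * U) :
    A.det = ∏ i, d i := by
  have := congrArg det h
  rw [det_mul, det_mul, det_diagonal, mul_comm] at this
  exact hU.mul_right_cancel this

theorem det_groupMatrix_of_isUnit [Group G] [Fintype G] [DecidableEq G] [CommRing R]
    {χ : G → G →* R} (hχ : IsUnit (charTable χ).det) (x : G → R) :
    (groupMatrix x).det = ∏ i, ∑ g, χ i g * x g :=
  det_eq_prod_of_mul_eq_diagonal_mul hχ (charTable_mul_groupMatrix χ x)

theorem isUnit_charTable [MulOneClass G] [Fintype G] [DecidableEq G] {K : Type*} [Field K]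
    {χ : G → G →* K} (hχ : Function.Injective χ) : IsUnit (charTable χ) :=
  linearIndependent_rows_iff_isUnit.mp ((linearIndependent_monoidHom G K).comp χ hχ)

theorem isUnit_det_charTable_comp [MulOneClass G] [Fintype G] [DecidableEq G] {K : Type*}
    [Field K] [CommRing R] (f : K →+* R) {χ : G → G →* K} (hχ : Function.Injective χ) :
    IsUnit (charTable fun i => (f : K →* R).comp (χ i)).det := by
  have := ((isUnit_iff_isUnit_det _).mp (isUnit_charTable hχ)).map f
  rwa [RingHom.map_det] at this

end Matrix

/-- **Dedekind–Frobenius factorization of the group determinant for abelian groups.**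
For a finite abelian group `G`, the determinant of the Frobenius matrix
`(X_{g h⁻¹})_{g,h}` of indeterminates factors as the product, over all characters
`χ : G →* ℂˣ`, of the linear forms `∑_g χ(g) X_g`. -/
theorem groupDeterminant_factorization_abelian
    (G : Type*) [CommGroup G] [Fintype G] [DecidableEq G]
    [Fintype (G →* ℂˣ)] :
    Matrix.det (Matrix.of fun g h : G => (MvPolynomial.X (g * h⁻¹) : MvPolynomial G ℂ)) =
      ∏ χ : G →* ℂˣ, ∑ g : G, MvPolynomial.C ((χ g : ℂˣ) : ℂ) * MvPolynomial.X g := by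
  obtain ⟨e⟩ := CommGroup.monoidHom_mulEquiv_of_hasEnoughRootsOfUnity G ℂ
  let χ : G → G →* ℂ := fun g => (Units.coeHom ℂ).comp (e.symm g)
  have hχ : Function.Injective χ := fun g h hgh =>
    e.symm.injective ((MonoidHom.cancel_left Units.coeHom_injective).mp hgh)
  show (groupMatrix X).det = _
  rw [← e.symm.prod_comp]
  exact det_groupMatrix_of_isUnit (isUnit_det_charTable_comp C hχ) X
end

section
/- Fix m ≥ 1 and let ℂ[Z] = ℂ[(z_{jl})_{1≤j,l≤m}] be the polynomial ring in the entries of an m×m matrix of variables. Let Ω = det(∂/∂z_{jl}) = ∑_{σ ∈ S_m} sign(σ) · ∏_{j=1}^m ∂/∂z_{jσ(j)} be the Cayley operator, a ℂ-linear endomorphism of ℂ[Z]. For A ∈ M_m(ℂ) and q ∈ ℂ[Z], let A⋆q be the polynomial obtained by substituting Z ↦ AᵀZ, i.e. replacing each variable z_{jl} by ∑_{k=1}^m A_{kj} z_{kl}. Then for every A ∈ M_m(ℂ) and every q ∈ ℂ[Z], Ω(A⋆q) = det(A) · (A⋆(Ω q)). In particular, if the rank of A is strictly less than m, then Ω(A⋆q)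 = 0 for all q ∈ ℂ[Z]. -/
open MvPolynomial

/-- The formal partial derivatives commute pairwise. -/
lemma pderiv_apply_comm {σ : Type*} (i j : σ) (f : MvPolynomial σ ℂ) :
    pderiv i (pderiv j f) = pderiv j (pderiv i f) := by
  classical
  induction f using MvPolynomial.induction_on' with
  | monomial s a =>
      rcases eq_or_ne i j with rfl | hij
      · rfl
      · simp only [pderiv_monomial]
        rw [tsub_right_comm]
        congr 1
        rw [Finsupp.tsub_apply, Finsupp.tsub_apply, Finsupp.single_apply, Finsupp.single_apply,
          if_neg hij, if_neg (Ne.symm hij)]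
        simp only [Nat.sub_zero]
        ring
  | add p q hp hq => simp [hp, hq]

lemma pderiv_end_commute {σ : Type*} (i j : σ) :
    Commute ((pderiv i).toLinearMap : Module.End ℂ (MvPolynomial σ ℂ))
      (pderiv j).toLinearMap := by
  refine LinearMap.ext fun p => ?_
  simpa using pderiv_apply_comm i j p

/-- The Cayley operator `Ω = ∑_{σ ∈ S_m} sign σ · ∏_j ∂/∂z_{j σ(j)}` on the polynomial
ring `ℂ[(z_{jl})_{1 ≤ j,l ≤ m}]` in the entries of an `m × m` matrix of variables. -/
noncomputable def cayleyOmega (m : ℕ) :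
    Module.End ℂ (MvPolynomial (Fin m × Fin m) ℂ) :=
  ∑ σ : Equiv.Perm (Fin m),
    (Equiv.Perm.sign σ : ℤ) •
      Finset.univ.noncommProd
        (fun j : Fin m =>
          ((pderiv (j, σ j)).toLinearMap : Module.End ℂ (MvPolynomial (Fin m × Fin m) ℂ)))
        (fun _ _ _ _ _ => pderiv_end_commute _ _)

/-- Substitution `Z ↦ Aᵀ Z`: the algebra endomorphism of `ℂ[Z]` replacing each variable
`z_{jl}` by `∑_k A_{kj} z_{kl}`. -/
noncomputable def starAct {m : ℕ} (A : Matrix (Fin m) (Fin m) ℂ) :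
    MvPolynomial (Fin m × Fin m) ℂ →ₐ[ℂ] MvPolynomial (Fin m × Fin m) ℂ :=
  MvPolynomial.aeval fun p : Fin m × Fin m =>
    ∑ k : Fin m, MvPolynomial.C (A k p.1) * MvPolynomial.X (k, p.2)

/-! The partial derivatives commute, so they generate a commutative subalgebra of
`Module.End ℂ ℂ[Z]`, and there `Ω` is the determinant of the matrix `D = (∂/∂z_{jl})`.
The chain rule gives `∂/∂z_{jl} ∘ (A⋆) = (A⋆) ∘ (A D)_{jl}`. Pairs `(x, y)` with
`x ∘ (A⋆) = (A⋆) ∘ y` form a subring, so the relation passes from the entries to the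
determinants: `Ω ∘ (A⋆) = (A⋆) ∘ det (A D) = det A • ((A⋆) ∘ Ω)`. -/

theorem MvPolynomial.pderiv_aeval {σ τ R : Type*} [CommSemiring R] [Fintype σ]
    (g : σ → MvPolynomial τ R) (j : τ) (q : MvPolynomial σ R) :
    pderiv j (aeval g q) = ∑ i, pderiv j (g i) * aeval g (pderiv i q) := by
  classical
  induction q using MvPolynomial.induction_on with
  | C a => simp only [aeval_C, algebraMap_eq, pderiv_C, mul_zero, Finset.sum_const_zero, map_zero]
  | add p q hp hq => simp only [map_add, hp, hq, mul_add, Finset.sum_add_distrib]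
  | mul_X p k hp =>
    simp only [map_mul, Derivation.leibniz, pderiv_X, aeval_X, hp, smul_eq_mul, map_add,
      mul_add, Finset.sum_add_distrib, Finset.mul_sum]
    congr 1
    · simp [Pi.single_apply, mul_comm]
    · exact Finset.sum_congr rfl fun i _ => by ring

lemma pderiv_starAct {m : ℕ} (A : Matrix (Fin m) (Fin m) ℂ) (j l : Fin m)
    (q : MvPolynomial (Fin m × Fin m) ℂ) :
    pderiv (j, l) (starAct A q) = ∑ i, A j i • starAct A (pderiv (i, l) q) := by
  rw [starAct, pderiv_aeval, Fintype.sum_prod_type]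
  simp [pderiv_X, Pi.single_apply, Prod.ext_iff, smul_eq_C_mul, ite_and]

def RingHom.intertwiningPairs {R M : Type*} [CommRing R] [Ring M] (φ : R →+* M) (s : M) :
    Subring (R × R) where
  carrier := {p | φ p.1 * s = s * φ p.2}
  mul_mem' {p q} hp hq := by
    simp only [Set.mem_ofPred_eq, Prod.fst_mul, Prod.snd_mul, map_mul] at *
    rw [mul_assoc, hq, ← mul_assoc, hp, mul_assoc]
  one_mem' := by simp
  add_mem' {p q} hp hq := by
    simp only [Set.mem_ofPred_eq, Prod.fst_add, Prod.snd_add, map_add] at *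
    rw [add_mul, mul_add, hp, hq]
  zero_mem' := by simp
  neg_mem' {p} hp := by
    simp only [Set.mem_ofPred_eq, Prod.fst_neg, Prod.snd_neg, map_neg] at *
    rw [neg_mul, mul_neg, hp]

theorem Matrix.map_det_mul_eq_mul_map_det {R M n : Type*} [CommRing R] [Ring M] [Fintype n]
    [DecidableEq n] (φ : R →+* M) (s : M) {D T : Matrix n n R}
    (h : ∀ i j, φ (D i j) * s = s * φ (T i j)) : φ D.det * s = s * φ T.det := by
  let P := φ.intertwiningPairs s
  let N : Matrix n n P := Matrix.of fun i j => ⟨(D i j, T i j), h i j⟩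
  have hfst : ((RingHom.fst R R).comp P.subtype).mapMatrix N = D := rfl
  have hsnd : ((RingHom.snd R R).comp P.subtype).mapMatrix N = T := rfl
  rw [← hfst, ← hsnd, ← RingHom.map_det, ← RingHom.map_det]
  exact N.det.2

noncomputable def pderivAlgebra (σ : Type*) : Subalgebra ℂ (Module.End ℂ (MvPolynomial σ ℂ)) :=
  Algebra.adjoin ℂ (Set.range fun i => (pderiv i).toLinearMap)

instance (σ : Type*) : IsMulCommutative (pderivAlgebra σ) :=
  Algebra.isMulCommutative_adjoin ℂ <| by
    rintro _ ⟨i, rfl⟩ _ ⟨j, rfl⟩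
    exact (pderiv_end_commute i j).eq

open scoped IsMulCommutative

noncomputable def pderivMatrix (m : ℕ) : Matrix (Fin m) (Fin m) (pderivAlgebra (Fin m × Fin m)) :=
  Matrix.of fun j l => ⟨(pderiv (j, l)).toLinearMap, Algebra.subset_adjoin ⟨(j, l), rfl⟩⟩

lemma cayleyOmega_eq_det (m : ℕ) :
    cayleyOmega m = (pderivAlgebra _).val (pderivMatrix m).det := by
  rw [← Matrix.det_transpose, Matrix.det_apply, map_sum]
  refine Finset.sum_congr rfl fun σ _ => ?_
  rw [Units.smul_def, map_zsmul]
  congr 1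
  rw [← Finset.noncommProd_eq_prod]
  symm
  exact (Finset.map_noncommProd _ _ _ _).trans rfl

theorem cayleyOmega_mul_starAct {m : ℕ} (A : Matrix (Fin m) (Fin m) ℂ) :
    cayleyOmega m * (starAct A).toLinearMap =
      A.det • ((starAct A).toLinearMap * cayleyOmega m) := by
  let φ := (pderivAlgebra (Fin m × Fin m)).val.toRingHom
  let T := A.map (algebraMap ℂ (pderivAlgebra (Fin m × Fin m))) * pderivMatrix m
  have chain_rule : ∀ j l, φ (pderivMatrix m j l) * (starAct A).toLinearMap =
      (starAct A).toLinearMap * φ (T j l) := by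
    intro j l
    refine LinearMap.ext fun q => ?_
    simp [φ, T, pderivMatrix, Matrix.mul_apply, pderiv_starAct, Algebra.smul_def]
  have det_T : T.det = A.det • (pderivMatrix m).det := by
    rw [Matrix.det_mul, ← RingHom.mapMatrix_apply, ← RingHom.map_det, Algebra.smul_def]
  calc cayleyOmega m * (starAct A).toLinearMap = (starAct A).toLinearMap * φ T.det := by
        rw [cayleyOmega_eq_det]
        exact Matrix.map_det_mul_eq_mul_map_det (R := pderivAlgebra (Fin m × Fin m))
          (M := Module.End ℂ (MvPolynomial (Fin m × Fin m) ℂ)) φ _ chain_rule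
    _ = A.det • ((starAct A).toLinearMap * cayleyOmega m) := by
        simp [φ, det_T, cayleyOmega_eq_det]

theorem cayleyOmega_starAct_general (m : ℕ)
    (A : Matrix (Fin m) (Fin m) ℂ) (q : MvPolynomial (Fin m × Fin m) ℂ) :
    cayleyOmega m (starAct A q) = A.det • starAct A (cayleyOmega m q) ∧
      (A.rank < m → cayleyOmega m (starAct A q) = 0) := by
  have hΩ : cayleyOmega m (starAct A q) = A.det • starAct A (cayleyOmega m q) :=
    LinearMap.congr_fun (cayleyOmega_mul_starAct A) q
  refine ⟨hΩ, fun hrank => ?_⟩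
  have hdet : A.det = 0 := by
    by_contra hne
    have := Matrix.rank_of_det_ne_zero hne
    rw [Fintype.card_fin] at this
    omega
  rw [hΩ, hdet, zero_smul]

/-- **Cayley's identity for the Ω-process.** For every `A ∈ M_m(ℂ)` and every
`q ∈ ℂ[Z]`, `Ω(A⋆q) = det A · (A⋆(Ω q))`; in particular, if `rank A < m`,
then `Ω(A⋆q) = 0`. -/
theorem cayleyOmega_starAct (m : ℕ) (hm : 1 ≤ m)
    (A : Matrix (Fin m) (Fin m) ℂ) (q : MvPolynomial (Fin m × Fin m) ℂ) :
    cayleyOmega m (starAct A q) = A.det • starAct A (cayleyOmega m q) ∧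
      (A.rank < m → cayleyOmega m (starAct A q) = 0) :=
  cayleyOmega_starAct_general m A q
end

section
/- Fix m ≥ 1 and let ℂ[Z] = ℂ[(z_{jl})_{1≤j,l≤m}]. Let Ω = ∑_{σ ∈ S_m} sign(σ) ∏_{j=1}^m ∂/∂z_{jσ(j)} be the Cayley operator and, for 1 ≤ j,l ≤ m, let Δ_{jl} = ∑_{h=1}^m z_{jh} ∂/∂z_{lh} be the polarization operator, both ℂ-linear endomorphisms of ℂ[Z]. Then for every j ≠ l, the operators Ω and Δ_{jl} commute: Ω ∘ Δ_{jl} = Δ_{jl} ∘ Ω on ℂ[Z]. -/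
open MvPolynomial

/-- The polarization operator `Δ_{jl} = ∑_h z_{jh} ∂/∂z_{lh}` on `ℂ[Z]`. -/
noncomputable def polarization (m : ℕ) (j l : Fin m) :
    Module.End ℂ (MvPolynomial (Fin m × Fin m) ℂ) :=
  ∑ h : Fin m,
    (LinearMap.mulLeft ℂ (MvPolynomial.X (j, h)) : Module.End ℂ (MvPolynomial (Fin m × Fin m) ℂ)) *
      (pderiv (l, h)).toLinearMap

/-! Among the factors of `∏ᵢ ∂/∂z_{iσ(i)}`, only `∂/∂z_{jσ(j)}` fails to commute with
multiplication by `z_{jh}`, and only for `h = σ(j)`; hence the commutator of this product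
with `Δ_{jl}` is the same product with `∂/∂z_{jσ(j)}` replaced by `∂/∂z_{lσ(j)}`.
Precomposing `σ` with the transposition `(j l)` merely permutes the factors of that product
while flipping the sign of `σ`, so in `Ω` these commutators cancel in pairs, as the terms of
a determinant with two equal rows do. -/

theorem Finset.noncommProd_mul_eq_mul_add_noncommProd_erase {ι A : Type*} [Semiring A]
    [DecidableEq ι] (s : Finset ι) (f : ι → A) (comm) {a : ι} (ha : a ∈ s) {x : A}
    (hcomm : ∀ i ∈ s, i ≠ a → Commute (f i) x) (hfa : f a * x = x * f a + 1) :
    s.noncommProd f comm * x =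
      x * s.noncommProd f comm + (s.erase a).noncommProd f (comm.mono (s.erase_subset a)) := by
  have hx : Commute x ((s.erase a).noncommProd f (comm.mono (s.erase_subset a))) :=
    noncommProd_commute _ _ _ _ fun i hi =>
      (hcomm i (mem_of_mem_erase hi) (ne_of_mem_erase hi)).symm
  rw [← mul_noncommProd_erase s ha f comm, mul_assoc, ← hx.eq, ← mul_assoc, hfa, add_mul,
    one_mul, mul_assoc]

theorem Finset.noncommProd_univ_comp_equiv {α β : Type*} [Fintype α] [Monoid β] (f : α → β)
    (e : α ≃ α) (comm comm') : univ.noncommProd (f ∘ e) comm' = univ.noncommProd f comm := by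
  unfold noncommProd
  congr 1
  rw [← Multiset.map_map, Multiset.map_univ_val_equiv]

theorem Equiv.Perm.sum_sign_smul_eq_zero_of_mul_swap {α M : Type*} [DecidableEq α] [Fintype α]
    [AddCommGroup M] (F : Perm α → M) {i j : α} (hij : i ≠ j)
    (hF : ∀ σ, F (σ * swap i j) = F σ) : ∑ σ, (sign σ : ℤ) • F σ = 0 :=
  Finset.sum_involution (fun σ _ => σ * swap i j)
    (fun σ _ => by simp [hF, sign_mul, sign_swap hij])
    (fun _ _ _ => (not_congr mul_swap_eq_iff).mpr hij) (fun _ _ => Finset.mem_univ _)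
    fun σ _ => mul_swap_involutive i j σ

section

open Finset

variable {κ ι : Type*}

theorem commute_pderiv_mulLeft_X {p q : κ} (h : p ≠ q) :
    Commute ((pderiv p).toLinearMap : Module.End ℂ (MvPolynomial κ ℂ))
      (LinearMap.mulLeft ℂ (X q)) :=
  LinearMap.ext fun f => by simp [pderiv_X_of_ne h.symm]

theorem pderiv_mul_mulLeft_X_self (p : κ) :
    ((pderiv p).toLinearMap : Module.End ℂ (MvPolynomial κ ℂ)) * LinearMap.mulLeft ℂ (X p) =
      LinearMap.mulLeft ℂ (X p) * (pderiv p).toLinearMap + 1 :=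
  LinearMap.ext fun f => by simp [add_comm]

theorem pairwise_commute_pderiv (s : Set ι) (v : ι → κ) :
    s.Pairwise (Function.onFun Commute fun i =>
      ((pderiv (v i)).toLinearMap : Module.End ℂ (MvPolynomial κ ℂ))) :=
  fun _ _ _ _ _ => pderiv_end_commute _ _

noncomputable def pderivProd (s : Finset ι) (v : ι → κ) :
    Module.End ℂ (MvPolynomial κ ℂ) :=
  s.noncommProd (fun i => (pderiv (v i)).toLinearMap) (pairwise_commute_pderiv _ v)

theorem commute_pderivProd_pderiv (s : Finset ι) (v : ι → κ) (p : κ) :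
    Commute (pderivProd s v) (pderiv p).toLinearMap :=
  (noncommProd_commute _ _ _ _ fun _ _ => pderiv_end_commute _ _).symm

theorem commute_pderivProd_mulLeft_X {s : Finset ι} {v : ι → κ} {q : κ}
    (h : ∀ i ∈ s, v i ≠ q) : Commute (pderivProd s v) (LinearMap.mulLeft ℂ (X q)) :=
  (noncommProd_commute _ _ _ _ fun i hi => (commute_pderiv_mulLeft_X (h i hi)).symm).symm

theorem pderivProd_mul_mulLeft_X [DecidableEq ι] {s : Finset ι} {v : ι → κ} {a : ι}
    (ha : a ∈ s) (hv : Set.InjOn v s) :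
    pderivProd s v * LinearMap.mulLeft ℂ (X (v a)) =
      LinearMap.mulLeft ℂ (X (v a)) * pderivProd s v + pderivProd (s.erase a) v :=
  noncommProd_mul_eq_mul_add_noncommProd_erase _ _ _ ha
    (fun _ hi hia => commute_pderiv_mulLeft_X fun h => hia (hv hi ha h))
    (pderiv_mul_mulLeft_X_self _)

theorem pderivProd_congr {s : Finset ι} {v w : ι → κ} (h : ∀ i ∈ s, v i = w i) :
    pderivProd s v = pderivProd s w :=
  noncommProd_congr rfl (fun i hi => by rw [h i hi]) _

theorem pderivProd_erase_mul [DecidableEq ι] {s : Finset ι} {a : ι} (ha : a ∈ s)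
    (v : ι → κ) (p : κ) :
    pderivProd (s.erase a) v * (pderiv p).toLinearMap = pderivProd s (Function.update v a p) := by
  have hv : pderivProd (s.erase a) v = pderivProd (s.erase a) (Function.update v a p) :=
    pderivProd_congr fun i hi => (Function.update_of_ne (ne_of_mem_erase hi) ..).symm
  calc pderivProd (s.erase a) v * (pderiv p).toLinearMap
      = pderivProd (s.erase a) (Function.update v a p) *
          (pderiv (Function.update v a p a)).toLinearMap := by rw [hv, Function.update_self]
    _ = pderivProd s (Function.update v a p) :=
      noncommProd_erase_mul s ha _ (pairwise_commute_pderiv _ _)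

theorem pderivProd_univ_comp_equiv [Fintype ι] (v : ι → κ) (e : ι ≃ ι) :
    pderivProd univ (v ∘ e) = pderivProd univ v :=
  noncommProd_univ_comp_equiv
    (fun i => ((pderiv (v i)).toLinearMap : Module.End ℂ (MvPolynomial κ ℂ))) e _ _

open Equiv

theorem cayleyOmega_eq_sum_pderivProd (m : ℕ) :
    cayleyOmega m =
      ∑ σ : Perm (Fin m), (Perm.sign σ : ℤ) • pderivProd univ (fun i => (i, σ i)) :=
  rfl

variable {m : ℕ}

theorem pderivProd_mul_polarization (σ : Perm (Fin m)) (j l : Fin m) :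
    pderivProd univ (fun i => (i, σ i)) * polarization m j l =
      polarization m j l * pderivProd univ (fun i => (i, σ i)) +
        pderivProd univ (Function.update (fun i => (i, σ i)) j (l, σ j)) := by
  set P := pderivProd univ (fun i => (i, σ i))
  have hterm : ∀ h, P * (LinearMap.mulLeft ℂ (X (j, h)) * (pderiv (l, h)).toLinearMap) =
      LinearMap.mulLeft ℂ (X (j, h)) * (pderiv (l, h)).toLinearMap * P +
        if σ j = h then
          pderivProd (univ.erase j) (fun i => (i, σ i)) * (pderiv (l, h)).toLinearMap
        else 0 := by
    intro h
    have hD := commute_pderivProd_pderiv univ (fun i => (i, σ i)) (l, h)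
    split_ifs with hσ
    · subst hσ
      rw [← mul_assoc, pderivProd_mul_mulLeft_X (mem_univ j)
        fun _ _ _ _ hi => congrArg Prod.fst hi, add_mul, mul_assoc, hD.eq, ← mul_assoc]
    · have hM : Commute P (LinearMap.mulLeft ℂ (X (j, h))) :=
        commute_pderivProd_mulLeft_X fun i _ hi => hσ (by cases hi; rfl)
      rw [(hM.mul_right hD).eq, add_zero]
  rw [polarization, mul_sum, sum_congr rfl fun h _ => hterm h, sum_add_distrib, ← sum_mul,
    sum_ite_eq, if_pos (mem_univ _), pderivProd_erase_mul (mem_univ j)]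

theorem pderivProd_update_mul_swap {j l : Fin m} (hjl : j ≠ l) (σ : Perm (Fin m)) :
    pderivProd univ (Function.update (fun i => (i, (σ * swap j l) i)) j (l, (σ * swap j l) j)) =
      pderivProd univ (Function.update (fun i => (i, σ i)) j (l, σ j)) := by
  rw [← pderivProd_univ_comp_equiv _ (swap j l)]
  congr 1
  funext i
  rcases eq_or_ne i j with rfl | hij
  · simp [hjl.symm]
  rcases eq_or_ne i l with rfl | hil
  · simp [hij]
  · simp [hij, swap_apply_of_ne_of_ne hij hil]

end

theorem cayleyOmega_commute_polarization_general (m : ℕ)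
    (j l : Fin m) (hjl : j ≠ l) :
    cayleyOmega m * polarization m j l = polarization m j l * cayleyOmega m := by
  have hcancel : ∑ σ : Equiv.Perm (Fin m), (Equiv.Perm.sign σ : ℤ) •
      pderivProd Finset.univ (Function.update (fun i => (i, σ i)) j (l, σ j)) = 0 :=
    Equiv.Perm.sum_sign_smul_eq_zero_of_mul_swap _ hjl (pderivProd_update_mul_swap hjl)
  rw [cayleyOmega_eq_sum_pderivProd, Finset.sum_mul, Finset.mul_sum]
  simp only [smul_mul_assoc, mul_smul_comm, pderivProd_mul_polarization, smul_add,
    Finset.sum_add_distrib, hcancel, add_zero]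

/-- For `j ≠ l`, the Cayley operator `Ω` commutes with the polarization operator
`Δ_{jl}`. -/
theorem cayleyOmega_commute_polarization (m : ℕ) (hm : 1 ≤ m)
    (j l : Fin m) (hjl : j ≠ l) :
    cayleyOmega m * polarization m j l = polarization m j l * cayleyOmega m :=
  cayleyOmega_commute_polarization_general m j l hjl
end

section
/- Fix m ≥ 1 and let ℂ[Z] = ℂ[(z_{jl})_{1≤j,l≤m}], with Cayley operator Ω = ∑_{σ ∈ S_m} sign(σ) ∏_{j=1}^m ∂/∂z_{jσ(j)} and polarization operators Δ_{jl} = ∑_{h=1}^m z_{jh} ∂/∂z_{lh}. Fix l with 1 ≤ l ≤ m, and let q ∈ ℂ[Z] be a polynomial depending only on the variables of the l-th row, i.e. only on z_{l1}, z_{l2}, …, z_{lm}. Then for every j ≠ l and every positive integer r, the polynomial Δ_{jl}^r(q) lies in the kernel of Ω: Ω(Δ_{jl}^r q) = 0. -/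
/-!
`Ω` is the determinant of the matrix `(∂/∂z_{ab})`, whose entries commute pairwise, and
`[∂/∂z_{ab}, Δ_{jl}] = δ_{aj} ∂/∂z_{lb}`. Hence `Ω Δ_{jl} - Δ_{jl} Ω` is the same determinant
with row `j` replaced by row `l`, which vanishes for `j ≠ l`; so `Ω` commutes with `Δ_{jl}^r`.
Finally `Ω q = 0`, because every term of `Ω` differentiates in a variable of row `j`, on which
`q` does not depend.
-/

open MvPolynomial

theorem Finset.noncommProd_univ_comp_equiv_s7 {ι M : Type*} [Fintype ι] [Monoid M] (e : ι ≃ ι)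
    (f : ι → M) (comm : ((Finset.univ : Finset ι) : Set ι).Pairwise (Function.onFun Commute f)) :
    Finset.univ.noncommProd (f ∘ e) (fun _ _ _ _ _ => comm.of_refl (by simp) (by simp)) =
      Finset.univ.noncommProd f comm := by
  simp only [Finset.noncommProd, ← Multiset.map_map]
  congr 2
  exact congrArg Finset.val (Finset.map_univ_equiv e)

section NoncommDet

variable {R ι : Type*} [Ring R] [Fintype ι] [DecidableEq ι]

noncomputable def noncommDet (M : ι → ι → R) (hM : ∀ a b c d, Commute (M a b) (M c d)) : R :=
  ∑ σ : Equiv.Perm ι, (Equiv.Perm.sign σ : ℤ) •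
    Finset.univ.noncommProd (fun k => M k (σ k)) (fun _ _ _ _ _ => hM _ _ _ _)

theorem noncommDet_eq_zero_of_row_eq {M : ι → ι → R} (hM : ∀ a b c d, Commute (M a b) (M c d))
    {i i' : ι} (hii' : i ≠ i') (hrow : M i = M i') : noncommDet M hM = 0 := by
  -- `σ` and `σ * swap i i'` contribute the same product with opposite signs.
  refine Finset.sum_involution (fun σ _ => σ * Equiv.swap i i') (fun σ _ => ?_)
    (fun σ _ _ h => hii' ?_) (fun _ _ => Finset.mem_univ _) (fun σ _ => by simp [mul_assoc])
  · have hswap : ∀ k, M (Equiv.swap i i' k) = M k := fun k => by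
      rw [Equiv.swap_apply_def]
      split_ifs with h₁ h₂ <;> simp_all
    have hterm : Finset.univ.noncommProd (fun k => M k ((σ * Equiv.swap i i') k))
        (fun _ _ _ _ _ => hM _ _ _ _) =
        Finset.univ.noncommProd (fun k => M k (σ k)) (fun _ _ _ _ _ => hM _ _ _ _) := by
      refine (Finset.noncommProd_congr rfl (fun k _ => ?_) _).trans
        (Finset.noncommProd_univ_comp_equiv_s7 (Equiv.swap i i') _ _)
      simp [hswap]
    rw [hterm, map_mul, Equiv.Perm.sign_swap hii', mul_neg, mul_one, Units.val_neg, neg_smul,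
      add_neg_cancel]
  · simpa using congrArg (· i') (mul_eq_left.1 h)

theorem noncommProd_mul_eq_mul_add_update_row {M : ι → ι → R}
    (hM : ∀ a b c d, Commute (M a b) (M c d)) {j l : ι}
    (hM' : ∀ a b c d, Commute (Function.update M j (M l) a b) (Function.update M j (M l) c d))
    {x : R} (hx : ∀ a, a ≠ j → ∀ b, Commute (M a b) x)
    (hxj : ∀ b, M j b * x = x * M j b + M l b) (σ : Equiv.Perm ι) :
    Finset.univ.noncommProd (fun k => M k (σ k)) (fun _ _ _ _ _ => hM _ _ _ _) * x =
      x * Finset.univ.noncommProd (fun k => M k (σ k)) (fun _ _ _ _ _ => hM _ _ _ _) +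
        Finset.univ.noncommProd (fun k => Function.update M j (M l) k (σ k))
          (fun _ _ _ _ _ => hM' _ _ _ _) := by
  have hP := Finset.noncommProd_erase_mul _ (Finset.mem_univ j) (fun k => M k (σ k))
    (fun _ _ _ _ _ => hM _ _ _ _)
  have hP' := Finset.noncommProd_erase_mul _ (Finset.mem_univ j)
    (fun k => Function.update M j (M l) k (σ k)) (fun _ _ _ _ _ => hM' _ _ _ _)
  have hQ : ((Finset.univ.erase j).noncommProd (fun k => Function.update M j (M l) k (σ k))
      fun _ _ _ _ _ => hM' _ _ _ _) =
      (Finset.univ.erase j).noncommProd (fun k => M k (σ k)) fun _ _ _ _ _ => hM _ _ _ _ :=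
    Finset.noncommProd_congr rfl
      (fun k hk => by rw [Function.update_of_ne (Finset.ne_of_mem_erase hk)]) _
  have hQx : Commute ((Finset.univ.erase j).noncommProd (fun k => M k (σ k))
      fun _ _ _ _ _ => hM _ _ _ _) x :=
    (Finset.noncommProd_commute _ _ _ _
      fun k hk => (hx k (Finset.ne_of_mem_erase hk) _).symm).symm
  rw [← hP, ← hP', hQ, mul_assoc, hxj, mul_add, ← mul_assoc, hQx.eq, mul_assoc,
    Function.update_self]

theorem noncommDet_commute_of_mul_eq {M : ι → ι → R} (hM : ∀ a b c d, Commute (M a b) (M c d))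
    {j l : ι} (hjl : j ≠ l) {x : R} (hx : ∀ a, a ≠ j → ∀ b, Commute (M a b) x)
    (hxj : ∀ b, M j b * x = x * M j b + M l b) :
    Commute (noncommDet M hM) x := by
  have hM' :
      ∀ a b c d, Commute (Function.update M j (M l) a b) (Function.update M j (M l) c d) := by
    intro a b c d
    simp only [Function.update_apply]
    split_ifs <;> apply hM
  have hzero : noncommDet (Function.update M j (M l)) hM' = 0 :=
    noncommDet_eq_zero_of_row_eq hM' hjl (by simp [hjl.symm])
  calc noncommDet M hM * x
      = ∑ σ : Equiv.Perm ι, ((Equiv.Perm.sign σ : ℤ) •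
          (x * Finset.univ.noncommProd (fun k => M k (σ k)) (fun _ _ _ _ _ => hM _ _ _ _)) +
          (Equiv.Perm.sign σ : ℤ) • Finset.univ.noncommProd
            (fun k => Function.update M j (M l) k (σ k)) (fun _ _ _ _ _ => hM' _ _ _ _)) := by
        simp only [noncommDet, Finset.sum_mul, smul_mul_assoc,
          noncommProd_mul_eq_mul_add_update_row hM hM' hx hxj, smul_add]
    _ = x * noncommDet M hM + noncommDet (Function.update M j (M l)) hM' := by
        simp only [noncommDet, Finset.sum_add_distrib, Finset.mul_sum, mul_smul_comm]
    _ = x * noncommDet M hM := by rw [hzero, add_zero]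

theorem noncommDet_apply_eq_zero {S V : Type*} [Semiring S] [AddCommGroup V] [Module S V]
    {M : ι → ι → Module.End S V} (hM : ∀ a b c d, Commute (M a b) (M c d)) (k : ι) {v : V}
    (hv : ∀ b, M k b v = 0) : noncommDet M hM v = 0 := by
  refine (LinearMap.sum_apply _ _ _).trans (Finset.sum_eq_zero fun σ _ => ?_)
  rw [← Finset.noncommProd_erase_mul _ (Finset.mem_univ k) (fun k => M k (σ k))
    (fun _ _ _ _ _ => hM _ _ _ _), LinearMap.smul_apply, Module.End.mul_apply, hv, map_zero,
    smul_zero]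

end NoncommDet

theorem MvPolynomial.pderiv_rename_eq_zero_of_notMem_range {R σ τ : Type*} [CommSemiring R]
    {f : τ → σ} {i : σ} (hi : i ∉ Set.range f) (p : MvPolynomial τ R) :
    pderiv i (rename f p) = 0 := by
  classical
  refine pderiv_eq_zero_of_notMem_vars fun h => hi ?_
  obtain ⟨t, -, rfl⟩ := Finset.mem_image.1 (vars_rename f p h)
  exact ⟨t, rfl⟩

theorem cayleyOmega_eq_noncommDet (m : ℕ) :
    cayleyOmega m = noncommDet (fun a b => ((pderiv (a, b)).toLinearMap :
      Module.End ℂ (MvPolynomial (Fin m × Fin m) ℂ))) (fun _ _ _ _ => pderiv_end_commute _ _) :=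
  rfl

section Polarization

variable {m : ℕ}

theorem polarization_apply (j l : Fin m) (p : MvPolynomial (Fin m × Fin m) ℂ) :
    polarization m j l p = ∑ h : Fin m, X (j, h) * pderiv (l, h) p := by
  simp [polarization, LinearMap.sum_apply, Module.End.mul_apply]

theorem pderiv_polarization (j l a b : Fin m) (p : MvPolynomial (Fin m × Fin m) ℂ) :
    pderiv (a, b) (polarization m j l p) =
      polarization m j l (pderiv (a, b) p) + if a = j then pderiv (l, b) p else 0 := by
  classical
  simp only [polarization_apply, map_sum, pderiv_mul, pderiv_X, Finset.sum_add_distrib,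
    pderiv_apply_comm (a, b)]
  rw [add_comm, add_right_inj]
  rcases eq_or_ne a j with rfl | haj
  · simp [Pi.single_apply, Prod.ext_iff]
  · simp [Prod.ext_iff, Ne.symm haj, haj]

theorem commute_cayleyOmega_polarization {j l : Fin m} (hjl : j ≠ l) :
    Commute (cayleyOmega m) (polarization m j l) := by
  rw [cayleyOmega_eq_noncommDet]
  refine noncommDet_commute_of_mul_eq _ hjl (fun a haj b => LinearMap.ext fun p => ?_)
    (fun b => LinearMap.ext fun p => ?_)
  · simp [pderiv_polarization, haj]
  · simp [pderiv_polarization]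

theorem cayleyOmega_rename_row_eq_zero {k l : Fin m} (hkl : k ≠ l)
    (q₀ : MvPolynomial (Fin m) ℂ) : cayleyOmega m (rename (fun h => (l, h)) q₀) = 0 := by
  rw [cayleyOmega_eq_noncommDet]
  exact noncommDet_apply_eq_zero _ k fun b =>
    pderiv_rename_eq_zero_of_notMem_range (by simpa using hkl.symm) q₀

end Polarization

theorem cayleyOmega_polarization_pow_row_eq_zero_general (m : ℕ)
    (j l : Fin m) (hjl : j ≠ l) (r : ℕ)
    (q : MvPolynomial (Fin m × Fin m) ℂ)
    (hq : ∃ q₀ : MvPolynomial (Fin m) ℂ,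
      q = MvPolynomial.rename (fun h : Fin m => (l, h)) q₀) :
    cayleyOmega m ((polarization m j l ^ r) q) = 0 := by
  obtain ⟨q₀, rfl⟩ := hq
  rw [← Module.End.mul_apply, ((commute_cayleyOmega_polarization hjl).pow_right r).eq,
    Module.End.mul_apply, cayleyOmega_rename_row_eq_zero hjl, map_zero]

/-- If `q` depends only on the variables `z_{l1}, …, z_{lm}` of the `l`-th row, then
for every `j ≠ l` and every `r > 0`, the polynomial `Δ_{jl}^r q` lies in the kernel of
the Cayley operator `Ω`. -/
theorem cayleyOmega_polarization_pow_row_eq_zero (m : ℕ) (hm : 1 ≤ m)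
    (j l : Fin m) (hjl : j ≠ l) (r : ℕ) (hr : 0 < r)
    (q : MvPolynomial (Fin m × Fin m) ℂ)
    (hq : ∃ q₀ : MvPolynomial (Fin m) ℂ,
      q = MvPolynomial.rename (fun h : Fin m => (l, h)) q₀) :
    cayleyOmega m ((polarization m j l ^ r) q) = 0 :=
  cayleyOmega_polarization_pow_row_eq_zero_general m j l hjl r q hq
end

section
/- Let G be a finite group of order n, let Θ(G) = det(X_{gh⁻¹}) ∈ ℂ[(X_g)_{g∈G}] be its group determinant, and let a : G → ℂ. Then the adjugate of the Frobenius matrix M = (a_{gh⁻¹})_{g,h∈G} has (g,h) entry equal to (1/n) times the formal partial derivative ∂Θ(G)/∂X_{h g⁻¹} evaluated at the point (a_g)_{g∈G}; here the adjugate is the matrix satisfying M · adj(M) = det(M) · I. -/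
/-!
Jacobi's formula expresses `∂Θ/∂X_w` as the sum of the adjugate entries `adj(X_{g h⁻¹})_{w⁻¹ g, g}`
over `g ∈ G`. The Frobenius matrix is invariant under simultaneous right translation of its
indices, hence so is its adjugate, and the `n` summands all agree once evaluated at `a`.
-/

open Matrix MvPolynomial Finset

namespace Derivation

variable {R A : Type*} [CommSemiring R]

theorem leibniz_prod {M ι : Type*} [CommSemiring A] [AddCommMonoid M] [Algebra R A] [Module A M]
    [Module R M] [DecidableEq ι] (D : Derivation R A M) (s : Finset ι) (f : ι → A) :
    D (∏ i ∈ s, f i) = ∑ i ∈ s, (∏ j ∈ s.erase i, f j) • D (f i) := by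
  induction s using Finset.induction_on with
  | empty => simp
  | insert a s ha ih =>
    rw [prod_insert ha, leibniz, ih, sum_insert ha, erase_insert ha, smul_sum, add_comm]
    congr 1
    refine sum_congr rfl fun i hi => ?_
    rw [erase_insert_of_ne (ne_of_mem_of_not_mem hi ha).symm,
      prod_insert fun h => ha (mem_of_mem_erase h), mul_smul]

theorem map_det [CommRing A] [Algebra R A] {n : Type*} [Fintype n] [DecidableEq n]
    (D : Derivation R A A) (M : Matrix n n A) :
    D M.det = ∑ i, (M.updateRow i fun j => D (M i j)).det := by
  have hrow (i : n) (σ : Equiv.Perm n) :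
      ∏ k, (M.updateRow i fun j => D (M i j)) k (σ k) =
        (∏ k ∈ univ.erase i, M k (σ k)) • D (M i (σ i)) := by
    rw [← mul_prod_erase univ _ (mem_univ i), updateRow_self, smul_eq_mul, mul_comm]
    congr 1
    exact prod_congr rfl fun k hk => by rw [updateRow_ne (ne_of_mem_erase hk)]
  simp_rw [← det_transpose M, ← det_transpose (updateRow _ _ _), det_apply, transpose_apply,
    hrow, map_sum, map_zsmul_unit, leibniz_prod, smul_sum]
  exact sum_comm

end Derivation

section Frobenius

variable {G R : Type*} [Group G]

def frobeniusMatrix (a : G → R) : Matrix G G R := of fun g h => a (g * h⁻¹)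

theorem adjugate_frobeniusMatrix_apply [Fintype G] [DecidableEq G] [CommRing R] (a : G → R)
    (g h : G) :
    adjugate (frobeniusMatrix a) g h = adjugate (frobeniusMatrix a) (g * h⁻¹) 1 := by
  have hinv : (frobeniusMatrix a).submatrix (Equiv.mulRight h⁻¹) (Equiv.mulRight h⁻¹) =
      frobeniusMatrix a := by
    ext x y
    simp [frobeniusMatrix, mul_assoc]
  conv_lhs => rw [← hinv, adjugate_submatrix_equiv_self]
  simp

theorem eval_adjugate_frobeniusMatrix_X [Fintype G] [DecidableEq G] [CommRing R] (a : G → R)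
    (g h : G) : eval a (adjugate (frobeniusMatrix X) g h) = adjugate (frobeniusMatrix a) g h := by
  have heval : (eval a).mapMatrix (frobeniusMatrix X) = frobeniusMatrix a := by
    ext x y
    simp [frobeniusMatrix]
  rw [← heval, ← RingHom.map_adjugate]
  rfl

theorem pderiv_frobeniusMatrix_X_apply [DecidableEq G] [CommSemiring R] (w g h : G) :
    pderiv w (frobeniusMatrix (X : G → MvPolynomial G R) g h) =
      Pi.single (M := fun _ => MvPolynomial G R) (w⁻¹ * g) 1 h := by
  simp only [frobeniusMatrix, of_apply, pderiv_X, Pi.single_apply, mul_inv_eq_iff_eq_mul,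
    eq_inv_mul_iff_mul_eq, eq_comm (a := g)]

theorem pderiv_det_frobeniusMatrix_X [Fintype G] [DecidableEq G] [CommRing R] (w : G) :
    pderiv w (frobeniusMatrix (X : G → MvPolynomial G R)).det =
      ∑ g, adjugate (frobeniusMatrix (X : G → MvPolynomial G R)) (w⁻¹ * g) g := by
  simp_rw [Derivation.map_det, pderiv_frobeniusMatrix_X_apply, adjugate_apply]

end Frobenius

/-- The `(g,h)` entry of the adjugate of the Frobenius matrix `(a_{g h⁻¹})` equals
`(1/n)` times the partial derivative `∂Θ(G)/∂X_{h g⁻¹}` of the group determinant,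
evaluated at the point `(a_g)_{g ∈ G}`, where `n = |G|`. -/
theorem adjugate_frobeniusMatrix_entry
    (G : Type*) [Group G] [Fintype G] [DecidableEq G] (a : G → ℂ) (g h : G) :
    Matrix.adjugate (Matrix.of fun g' h' : G => a (g' * h'⁻¹)) g h =
      (1 / (Fintype.card G : ℂ)) *
        MvPolynomial.eval a
          (MvPolynomial.pderiv (h * g⁻¹)
            (Matrix.det
              (Matrix.of fun g' h' : G => (MvPolynomial.X (g' * h'⁻¹) : MvPolynomial G ℂ)))) := by
  show adjugate (frobeniusMatrix a) g h =
    1 / (Fintype.card G : ℂ) * eval a (pderiv (h * g⁻¹) (frobeniusMatrix X).det)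
  have hsum : eval a (pderiv (h * g⁻¹) (frobeniusMatrix X).det) =
      Fintype.card G * adjugate (frobeniusMatrix a) g h := by
    have hterm (x : G) :
        eval a (adjugate (frobeniusMatrix X) ((h * g⁻¹)⁻¹ * x) x) =
          adjugate (frobeniusMatrix a) g h := by
      rw [eval_adjugate_frobeniusMatrix_X, adjugate_frobeniusMatrix_apply,
        adjugate_frobeniusMatrix_apply a g h]
      group
    rw [pderiv_det_frobeniusMatrix_X, map_sum, sum_congr rfl fun x _ => hterm x, sum_const,
      card_univ, nsmul_eq_mul]
  rw [hsum, one_div, inv_mul_cancel_left₀ (Nat.cast_ne_zero.mpr Fintype.card_ne_zero)]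
end

section
/- Let n ≥ 3. There is no affine subspace of ℂⁿ of dimension n−2 entirely contained in the affine hypersurface {(x_1,…,x_n) ∈ ℂⁿ : x_1x_2⋯x_n = 1}. Equivalently, for every point p ∈ ℂⁿ with p_1⋯p_n = 1 and every linearly independent family of n−2 vectors v_1,…,v_{n−2} ∈ ℂⁿ, there exist scalars λ_1,…,λ_{n−2} ∈ ℂ such that the product of the coordinates of p + λ_1 v_1 + ⋯ + λ_{n−2} v_{n−2} is not equal to 1. -/
/-!
The hypersurface contains no affine line, let alone an `(n - 2)`-plane: if the direction `w`
of a line `p + t w` has `w i ≠ 0`, the line meets the coordinate hyperplane `xᵢ = 0`, where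
the coordinate product is `0 ≠ 1`.
-/

theorem exists_prod_add_mul_eq_zero {ι K : Type*} [Fintype ι] [Field K] (p w : ι → K)
    (hw : w ≠ 0) : ∃ t : K, ∏ i, (p i + t * w i) = 0 := by
  obtain ⟨i, hi⟩ : ∃ i, w i ≠ 0 := Function.ne_iff.mp hw
  refine ⟨-p i / w i, Finset.prod_eq_zero (Finset.mem_univ i) ?_⟩
  rw [div_mul_cancel₀ _ hi, add_neg_cancel]

theorem no_affine_subspace_in_hypersurface_general (n : ℕ) (hn : 3 ≤ n)
    (p : Fin n → ℂ)
    (v : Fin (n - 2) → Fin n → ℂ) (hv : LinearIndependent ℂ v) :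
    ∃ lam : Fin (n - 2) → ℂ,
      ∏ i : Fin n, (p i + ∑ j : Fin (n - 2), lam j * v j i) ≠ 1 := by
  let j₀ : Fin (n - 2) := ⟨0, by omega⟩
  obtain ⟨t, ht⟩ := exists_prod_add_mul_eq_zero p (v j₀) (hv.ne_zero j₀)
  refine ⟨Pi.single j₀ t, ?_⟩
  simp only [Pi.single_apply, ite_mul, zero_mul, Finset.sum_ite_eq', Finset.mem_univ, if_true, ht]
  exact zero_ne_one

/-- For `n ≥ 3`, no affine subspace of `ℂⁿ` of dimension `n − 2` is contained in the
hypersurface `x₁ x₂ ⋯ xₙ = 1`: for any point `p` with `∏ pᵢ = 1` and any linearly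
independent family `v₁, …, v_{n−2}`, some point `p + ∑ λⱼ vⱼ` has coordinate product
different from `1`. -/
theorem no_affine_subspace_in_hypersurface (n : ℕ) (hn : 3 ≤ n)
    (p : Fin n → ℂ) (hp : ∏ i : Fin n, p i = 1)
    (v : Fin (n - 2) → Fin n → ℂ) (hv : LinearIndependent ℂ v) :
    ∃ lam : Fin (n - 2) → ℂ,
      ∏ i : Fin n, (p i + ∑ j : Fin (n - 2), lam j * v j i) ≠ 1 :=
  no_affine_subspace_in_hypersurface_general n hn p v hv
end

section
/- Let f be a Schwartz function on ℝ³ and define ψ : ℝ⁴ → ℝ (in the coordinates (α_1, α_2, β_1, β_2)) by the John transform ψ(α_1,α_2,β_1,β_2) = ∫_{−∞}^{+∞} f(α_1 s + β_1, α_2 s + β_2, s) ds. Then ψ satisfies the ultrahyperbolic equation ∂²ψ/∂α_1∂β_2 = ∂²ψ/∂α_2∂β_1 at every point of ℝ⁴, where the mixed second partial derivatives are iterated directional derivatives along the corresponding coordinate directions. -/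
/-!
Differentiating under the integral sign, which is legitimate because `f` and its derivatives
decay faster than any power of `|s|` along the lines, uniformly in the parameters, gives
`∂²ψ/∂α₁∂β₂ = ∫ s ∂₁∂₂f(α₁ s + β₁, α₂ s + β₂, s) ds` and
`∂²ψ/∂α₂∂β₁ = ∫ s ∂₂∂₁f(α₁ s + β₁, α₂ s + β₂, s) ds`; mixed partials of `f` commute.
-/

open MeasureTheory LineDeriv
open scoped SchwartzMap

namespace SchwartzMap

variable {E F : Type*} [NormedAddCommGroup E] [NormedSpace ℝ E]
  [NormedAddCommGroup F] [NormedSpace ℝ F]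

theorem fderiv_lineDerivOp_apply (f : 𝓢(E, F)) (u v x : E) :
    fderiv ℝ (∂_{v} f : 𝓢(E, F)) x u = fderiv ℝ (fderiv ℝ f) x u v := by
  have hd : DifferentiableAt ℝ (fderiv ℝ f) x :=
    ((f.smooth 2).fderiv_right (m := 1) le_rfl).differentiable one_ne_zero x
  have : ⇑(∂_{v} f : 𝓢(E, F)) = fun y => fderiv ℝ f y v :=
    funext (lineDerivOp_apply_eq_fderiv v f)
  simp [this, fderiv_clm_apply hd (differentiableAt_const v)]

theorem lineDerivOp_comm (f : 𝓢(E, F)) (u v : E) :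
    ∂_{u} (∂_{v} f : 𝓢(E, F)) = ∂_{v} (∂_{u} f : 𝓢(E, F)) := by
  ext x
  simp only [lineDerivOp_apply_eq_fderiv, fderiv_lineDerivOp_apply]
  exact (f.smooth 2).contDiffAt.isSymmSndFDerivAt (by simp) u v

theorem exists_one_add_norm_pow_mul_le (f : 𝓢(E, F)) (k : ℕ) :
    ∃ C, ∀ x, (1 + ‖x‖) ^ k * ‖f x‖ ≤ C :=
  ⟨_, fun x => by
    simpa using one_add_le_sup_seminorm_apply (𝕜 := ℝ) (m := (k, 0)) le_rfl le_rfl f x⟩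

end SchwartzMap

theorem one_add_sq_le_one_add_abs_pow (s : ℝ) {k : ℕ} (hk : 2 ≤ k) :
    1 + s ^ 2 ≤ (1 + |s|) ^ k :=
  calc 1 + s ^ 2 ≤ (1 + |s|) ^ 2 := by nlinarith [abs_nonneg s, sq_abs s]
    _ ≤ (1 + |s|) ^ k := pow_le_pow_right₀ (by simp) hk

theorem integrable_of_norm_le_mul_inv_one_add_sq {G : Type*} [NormedAddCommGroup G]
    {φ : ℝ → G} (hφ : Continuous φ) {C : ℝ} (hC : ∀ s, ‖φ s‖ ≤ C * (1 + s ^ 2)⁻¹) :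
    Integrable φ :=
  (integrable_inv_one_add_sq.const_mul C).mono' hφ.aestronglyMeasurable (.of_forall hC)

noncomputable section

def johnLine (w : Fin 4 → ℝ) (s : ℝ) : Fin 3 → ℝ := ![w 0 * s + w 2, w 1 * s + w 3, s]

def johnLineFDeriv (s : ℝ) : (Fin 4 → ℝ) →L[ℝ] (Fin 3 → ℝ) :=
  s • ContinuousLinearMap.pi ![.proj 0, .proj 1, 0] +
    ContinuousLinearMap.pi ![.proj 2, .proj 3, 0]

theorem johnLineFDeriv_apply (s : ℝ) (u : Fin 4 → ℝ) :
    johnLineFDeriv s u = ![u 0 * s + u 2, u 1 * s + u 3, 0] := by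
  ext i
  fin_cases i <;> simp [johnLineFDeriv, mul_comm]

theorem johnLine_eq (w : Fin 4 → ℝ) (s : ℝ) :
    johnLine w s = johnLineFDeriv s w + ![0, 0, s] := by
  ext i
  fin_cases i <;> simp [johnLine, johnLineFDeriv_apply]

theorem hasFDerivAt_johnLine (w : Fin 4 → ℝ) (s : ℝ) :
    HasFDerivAt (johnLine · s) (johnLineFDeriv s) w := by
  simpa only [johnLine_eq] using (johnLineFDeriv s).hasFDerivAt.add_const _

theorem continuous_johnLine (w : Fin 4 → ℝ) : Continuous (johnLine w) := by
  unfold johnLine; fun_prop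

theorem continuous_johnLineFDeriv : Continuous johnLineFDeriv := by
  unfold johnLineFDeriv; fun_prop

theorem abs_le_norm_johnLine (w : Fin 4 → ℝ) (s : ℝ) : |s| ≤ ‖johnLine w s‖ :=
  norm_le_pi_norm (johnLine w s) 2

theorem norm_johnLineFDeriv_le (s : ℝ) : ‖johnLineFDeriv s‖ ≤ 1 + |s| := by
  refine ContinuousLinearMap.opNorm_le_bound _ (by positivity) fun u => ?_
  have hline (i j : Fin 4) : |u i * s + u j| ≤ (1 + |s|) * ‖u‖ :=
    calc |u i * s + u j| ≤ |u i| * |s| + |u j| := by grw [abs_add_le, abs_mul]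
      _ ≤ ‖u‖ * |s| + ‖u‖ := by gcongr <;> exact norm_le_pi_norm u _
      _ = (1 + |s|) * ‖u‖ := by ring
  rw [johnLineFDeriv_apply, pi_norm_le_iff_of_nonneg (by positivity)]
  intro i
  fin_cases i
  · exact hline 0 2
  · exact hline 1 3
  · simp only [Fin.reduceFinMk, Matrix.cons_val, norm_zero]
    positivity

variable {F : Type*} [NormedAddCommGroup F] [NormedSpace ℝ F]

def johnTransform (g : 𝓢(Fin 3 → ℝ, F)) (w : Fin 4 → ℝ) : F := ∫ s, g (johnLine w s)

theorem exists_norm_comp_johnLine_le (g : 𝓢(Fin 3 → ℝ, F)) :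
    ∃ C, ∀ w s, ‖g (johnLine w s)‖ ≤ C * (1 + s ^ 2)⁻¹ := by
  obtain ⟨C, hC⟩ := g.exists_one_add_norm_pow_mul_le 2
  refine ⟨C, fun w s => ?_⟩
  rw [← div_eq_mul_inv, le_div_iff₀ (by positivity)]
  calc ‖g (johnLine w s)‖ * (1 + s ^ 2)
      ≤ ‖g (johnLine w s)‖ * (1 + ‖johnLine w s‖) ^ 2 := by
        grw [one_add_sq_le_one_add_abs_pow s le_rfl, abs_le_norm_johnLine]
    _ ≤ C := by rw [mul_comm]; exact hC _

/-- The extra factor `1 + |s|` coming from `‖johnLineFDeriv s‖` costs one power of decay. -/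
theorem exists_norm_fderiv_comp_johnLineFDeriv_le (g : 𝓢(Fin 3 → ℝ, F)) :
    ∃ C, ∀ w s,
      ‖(fderiv ℝ g (johnLine w s)).comp (johnLineFDeriv s)‖ ≤ C * (1 + s ^ 2)⁻¹ := by
  obtain ⟨C, hC⟩ := (SchwartzMap.fderivCLM ℝ (Fin 3 → ℝ) F g).exists_one_add_norm_pow_mul_le 3
  refine ⟨C, fun w s => ?_⟩
  rw [← div_eq_mul_inv, le_div_iff₀ (by positivity)]
  calc ‖(fderiv ℝ g (johnLine w s)).comp (johnLineFDeriv s)‖ * (1 + s ^ 2)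
      ≤ ‖fderiv ℝ g (johnLine w s)‖ * (1 + |s|) * (1 + |s|) ^ 2 := by
        grw [ContinuousLinearMap.opNorm_comp_le, norm_johnLineFDeriv_le,
          one_add_sq_le_one_add_abs_pow s le_rfl]
    _ = (1 + |s|) ^ 3 * ‖fderiv ℝ g (johnLine w s)‖ := by ring
    _ ≤ (1 + ‖johnLine w s‖) ^ 3 * ‖fderiv ℝ g (johnLine w s)‖ := by
        grw [abs_le_norm_johnLine]
    _ ≤ C := hC _

theorem continuous_fderiv_comp_johnLineFDeriv (g : 𝓢(Fin 3 → ℝ, F)) (w : Fin 4 → ℝ) :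
    Continuous fun s => (fderiv ℝ g (johnLine w s)).comp (johnLineFDeriv s) :=
  ((g.smooth 1).continuous_fderiv one_ne_zero |>.comp (continuous_johnLine w)).clm_comp
    continuous_johnLineFDeriv

theorem hasFDerivAt_johnTransform (g : 𝓢(Fin 3 → ℝ, F)) (w : Fin 4 → ℝ) :
    HasFDerivAt (johnTransform g)
      (∫ s, (fderiv ℝ g (johnLine w s)).comp (johnLineFDeriv s)) w := by
  obtain ⟨C₀, hC₀⟩ := exists_norm_comp_johnLine_le g
  obtain ⟨C₁, hC₁⟩ := exists_norm_fderiv_comp_johnLineFDeriv_le g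
  exact hasFDerivAt_integral_of_dominated_of_fderiv_le
    (bound := fun s => C₁ * (1 + s ^ 2)⁻¹) Filter.univ_mem
    (.of_forall fun y => (g.continuous.comp (continuous_johnLine y)).aestronglyMeasurable)
    (integrable_of_norm_le_mul_inv_one_add_sq (g.continuous.comp (continuous_johnLine w))
      (hC₀ w))
    (continuous_fderiv_comp_johnLineFDeriv g w).aestronglyMeasurable
    (.of_forall fun s y _ => hC₁ y s) (integrable_inv_one_add_sq.const_mul C₁)
    (.of_forall fun s y _ => (g.hasFDerivAt _).comp y (hasFDerivAt_johnLine y s))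

theorem fderiv_johnTransform_apply (g : 𝓢(Fin 3 → ℝ, F)) (w u : Fin 4 → ℝ) :
    fderiv ℝ (johnTransform g) w u = ∫ s, ∂_{johnLineFDeriv s u} g (johnLine w s) := by
  obtain ⟨C, hC⟩ := exists_norm_fderiv_comp_johnLineFDeriv_le g
  rw [(hasFDerivAt_johnTransform g w).fderiv, ContinuousLinearMap.integral_apply
    (integrable_of_norm_le_mul_inv_one_add_sq (continuous_fderiv_comp_johnLineFDeriv g w)
      (hC w))]
  rfl

theorem fderiv_johnTransform_apply_single_two (g : 𝓢(Fin 3 → ℝ, F)) (w : Fin 4 → ℝ) :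
    fderiv ℝ (johnTransform g) w (Pi.single 2 1) =
      johnTransform (∂_{(Pi.single 0 1 : Fin 3 → ℝ)} g) w := by
  have h (s : ℝ) : johnLineFDeriv s (Pi.single 2 1) = Pi.single 0 1 := by
    ext i; fin_cases i <;> simp [johnLineFDeriv_apply]
  simp only [fderiv_johnTransform_apply, h, johnTransform]

theorem fderiv_johnTransform_apply_single_three (g : 𝓢(Fin 3 → ℝ, F)) (w : Fin 4 → ℝ) :
    fderiv ℝ (johnTransform g) w (Pi.single 3 1) =
      johnTransform (∂_{(Pi.single 1 1 : Fin 3 → ℝ)} g) w := by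
  have h (s : ℝ) : johnLineFDeriv s (Pi.single 3 1) = Pi.single 1 1 := by
    ext i; fin_cases i <;> simp [johnLineFDeriv_apply]
  simp only [fderiv_johnTransform_apply, h, johnTransform]

theorem fderiv_johnTransform_apply_single_zero (g : 𝓢(Fin 3 → ℝ, F)) (w : Fin 4 → ℝ) :
    fderiv ℝ (johnTransform g) w (Pi.single 0 1) =
      ∫ s, s • ∂_{(Pi.single 0 1 : Fin 3 → ℝ)} g (johnLine w s) := by
  have h (s : ℝ) : johnLineFDeriv s (Pi.single 0 1) = s • Pi.single 0 1 := by
    ext i; fin_cases i <;> simp [johnLineFDeriv_apply]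
  simp only [fderiv_johnTransform_apply, h, lineDerivOp_left_smul, smul_apply]

theorem fderiv_johnTransform_apply_single_one (g : 𝓢(Fin 3 → ℝ, F)) (w : Fin 4 → ℝ) :
    fderiv ℝ (johnTransform g) w (Pi.single 1 1) =
      ∫ s, s • ∂_{(Pi.single 1 1 : Fin 3 → ℝ)} g (johnLine w s) := by
  have h (s : ℝ) : johnLineFDeriv s (Pi.single 1 1) = s • Pi.single 1 1 := by
    ext i; fin_cases i <;> simp [johnLineFDeriv_apply]
  simp only [fderiv_johnTransform_apply, h, lineDerivOp_left_smul, smul_apply]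

end

/-- **John's transform solves the ultrahyperbolic equation.** For a Schwartz function
`f` on `ℝ³`, the John transform
`ψ(α₁,α₂,β₁,β₂) = ∫ f(α₁ s + β₁, α₂ s + β₂, s) ds` (with `ℝ⁴` coordinatized as
`w = (α₁, α₂, β₁, β₂) = (w 0, w 1, w 2, w 3)`) satisfies
`∂²ψ/∂α₁∂β₂ = ∂²ψ/∂α₂∂β₁` at every point, where the second mixed partials are iterated
directional derivatives along the coordinate directions. -/
theorem john_transform_ultrahyperbolic
    (f : SchwartzMap (Fin 3 → ℝ) ℝ)
    (ψ : (Fin 4 → ℝ) → ℝ)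
    (hψ : ∀ w : Fin 4 → ℝ,
      ψ w = ∫ s : ℝ, f ![w 0 * s + w 2, w 1 * s + w 3, s])
    (w : Fin 4 → ℝ) :
    fderiv ℝ (fun y : Fin 4 → ℝ => fderiv ℝ ψ y (Pi.single 3 1)) w (Pi.single 0 1) =
      fderiv ℝ (fun y : Fin 4 → ℝ => fderiv ℝ ψ y (Pi.single 2 1)) w (Pi.single 1 1) := by
  obtain rfl : ψ = johnTransform f := funext hψ
  have hβ₂ : (fun y => fderiv ℝ (johnTransform f) y (Pi.single 3 1)) =
      johnTransform (∂_{(Pi.single 1 1 : Fin 3 → ℝ)} f) :=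
    funext (fderiv_johnTransform_apply_single_three f)
  have hβ₁ : (fun y => fderiv ℝ (johnTransform f) y (Pi.single 2 1)) =
      johnTransform (∂_{(Pi.single 0 1 : Fin 3 → ℝ)} f) :=
    funext (fderiv_johnTransform_apply_single_two f)
  rw [hβ₂, hβ₁, fderiv_johnTransform_apply_single_zero, fderiv_johnTransform_apply_single_one,
    SchwartzMap.lineDerivOp_comm]
end
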